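/- arXiv:2110.11253 — 2 statements merged into one kernel-verified Lean document; each statement's English description precedes it below -/
import Mathlib

section
/- Let A ∈ ℝ^{n×n}, B ∈ ℝ^{n×w}, C ∈ ℝ^{p×n}, let η > 0 and ϑ > 0, and suppose there exist symmetric matrices P ∈ ℝ^{n×n} and Z ∈ ℝ^{p×p} such that the block matrices [[P, AP, B],[PAᵀ, P, 0],[Bᵀ, 0, I_w]] − ϑI and [[Z, CP],[PCᵀ, P]] − ϑI are positive semidefinite and Trace(Z) ≤ η − ϑ. Then every complex eigenvalue of A has modulus strictly less than 1, and the series Σ_{k=0}^{∞} Trace((C A^k B)(C A^k B)ᵀ) converges with Σ_{k=0}^{∞} Trace((C A^k B)(C A^k B)ᵀ) < η. -/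
/-!
Compressing the first LMI by `[I, -A, -B]` and the second by `[I, -C]` and `[0, I]` yields
the Stein inequality `A P Aᵀ + B Bᵀ + ϑ I ≤ P` together with `C P Cᵀ ≤ Z` and `ϑ I ≤ P`.
Iterating the Stein inequality bounds the partial sums of the controllability Gramian
`∑ Aᵏ B Bᵀ (Aᵏ)ᵀ` by `P`, hence the partial H₂ sums by `tr (C P Cᵀ) ≤ tr Z ≤ η - ϑ`.
For a left eigenvector `v` of `A` with eigenvalue `z`, the strict inequality `A P Aᵀ < P`
reads `(1 - |z|²) v* P v > 0`, and `v* P v ≥ 0` forces `|z| < 1`.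
-/

open Matrix Finset
open scoped MatrixOrder ComplexOrder

namespace Matrix

lemma fromRows_add_fromRows {R m₁ m₂ n : Type*} [Add R] (A₁ B₁ : Matrix m₁ n R)
    (A₂ B₂ : Matrix m₂ n R) :
    fromRows A₁ A₂ + fromRows B₁ B₂ = fromRows (A₁ + B₁) (A₂ + B₂) := by
  ext (_ | _) _ <;> rfl

section RCLike

variable {𝕜 : Type*} [RCLike 𝕜] {l m n : Type*}

lemma nonneg_of_smul_one_le [DecidableEq n] {M : Matrix n n 𝕜} {ϑ : ℝ} (hϑ : 0 ≤ ϑ)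
    (h : ϑ • 1 ≤ M) : 0 ≤ M :=
  (PosSemidef.one.smul hϑ).nonneg.trans h

lemma posDef_of_smul_one_le [DecidableEq n] {M : Matrix n n 𝕜} {ϑ : ℝ} (hϑ : 0 < ϑ)
    (h : ϑ • 1 ≤ M) : M.PosDef := by
  simpa using PosDef.posSemidef_add (le_iff.mp h) (PosDef.one.smul hϑ)

variable [Fintype m] [Fintype n]

lemma mul_mul_conjTranspose_le_mul_mul_conjTranspose {X Y : Matrix m m 𝕜} (h : X ≤ Y)
    (S : Matrix n m 𝕜) : S * X * Sᴴ ≤ S * Y * Sᴴ := by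
  rw [le_iff, ← Matrix.sub_mul, ← Matrix.mul_sub]
  exact h.mul_mul_conjTranspose_same S

lemma smul_one_le_mul_mul_conjTranspose [DecidableEq m] [DecidableEq n] {M : Matrix m m 𝕜}
    {S : Matrix n m 𝕜} {ϑ : ℝ} (hϑ : 0 ≤ ϑ) (hM : ϑ • 1 ≤ M) (hS : 1 ≤ S * Sᴴ) :
    ϑ • 1 ≤ S * M * Sᴴ :=
  calc ϑ • (1 : Matrix n n 𝕜)
      ≤ ϑ • (S * Sᴴ) := by rw [le_iff, ← smul_sub]; exact (le_iff.mp hS).smul hϑ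
    _ = S * (ϑ • (1 : Matrix m m 𝕜)) * Sᴴ := by simp
    _ ≤ S * M * Sᴴ := mul_mul_conjTranspose_le_mul_mul_conjTranspose hM S

lemma sum_pow_mul_mul_conjTranspose_add_le [DecidableEq n] {A P : Matrix n n 𝕜}
    {B : Matrix n m 𝕜} (h : A * P * Aᴴ + B * Bᴴ ≤ P) (N : ℕ) :
    ∑ k ∈ range N, A ^ k * B * (A ^ k * B)ᴴ + A ^ N * P * (A ^ N)ᴴ ≤ P := by
  induction N with
  | zero => simp
  | succ N ih =>
    calc ∑ k ∈ range (N + 1), A ^ k * B * (A ^ k * B)ᴴ + A ^ (N + 1) * P * (A ^ (N + 1))ᴴ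
        = ∑ k ∈ range N, A ^ k * B * (A ^ k * B)ᴴ
            + A ^ N * (A * P * Aᴴ + B * Bᴴ) * (A ^ N)ᴴ := by
          rw [sum_range_succ, pow_succ, conjTranspose_mul, conjTranspose_mul]
          simp only [Matrix.mul_add, Matrix.add_mul, Matrix.mul_assoc]
          abel
      _ ≤ ∑ k ∈ range N, A ^ k * B * (A ^ k * B)ᴴ + A ^ N * P * (A ^ N)ᴴ :=
          add_le_add le_rfl (mul_mul_conjTranspose_le_mul_mul_conjTranspose h _)
      _ ≤ P := ih

lemma trace_le_trace {X Y : Matrix n n 𝕜} (h : X ≤ Y) : X.trace ≤ Y.trace := by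
  have := (le_iff.mp h).trace_nonneg
  rwa [trace_sub, sub_nonneg] at this

lemma sum_range_trace_mul_pow_mul_le [Fintype l] [DecidableEq n] {A P : Matrix n n 𝕜}
    {B : Matrix n m 𝕜} (hP : 0 ≤ P) (h : A * P * Aᴴ + B * Bᴴ ≤ P) (C : Matrix l n 𝕜) (N : ℕ) :
    ∑ k ∈ range N, (C * A ^ k * B * (C * A ^ k * B)ᴴ).trace ≤ (C * P * Cᴴ).trace := by
  have hsum : ∑ k ∈ range N, A ^ k * B * (A ^ k * B)ᴴ ≤ P :=
    (le_add_of_nonneg_right (hP.posSemidef.mul_mul_conjTranspose_same _).nonneg).trans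
      (sum_pow_mul_mul_conjTranspose_add_le h N)
  calc ∑ k ∈ range N, (C * A ^ k * B * (C * A ^ k * B)ᴴ).trace
      = (C * (∑ k ∈ range N, A ^ k * B * (A ^ k * B)ᴴ) * Cᴴ).trace := by
        simp only [Matrix.mul_sum, Matrix.sum_mul, trace_sum, conjTranspose_mul, Matrix.mul_assoc]
    _ ≤ (C * P * Cᴴ).trace := trace_le_trace (mul_mul_conjTranspose_le_mul_mul_conjTranspose hsum C)

lemma norm_lt_one_of_mem_spectrum_of_posDef_sub [DecidableEq n] {A P : Matrix n n 𝕜}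
    (hP : P.PosSemidef) (hAP : (P - A * P * Aᴴ).PosDef) {z : 𝕜} (hz : z ∈ spectrum 𝕜 A) :
    ‖z‖ < 1 := by
  have hz' : star z ∈ spectrum 𝕜 Aᴴ := by
    rw [← star_eq_conjTranspose, spectrum.map_star, Set.star_mem_star]; exact hz
  obtain ⟨v, hv⟩ := (Module.End.hasEigenvalue_iff_mem_spectrum.mpr
    ((spectrum_toLin' Aᴴ).symm ▸ hz')).exists_hasEigenvector
  have hAv : Aᴴ *ᵥ v = star z • v := by simpa using hv.apply_eq_smul
  have hvA : star v ᵥ* A = z • star v := by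
    have := congrArg star hAv
    rwa [star_mulVec, conjTranspose_conjTranspose, star_smul, star_star] at this
  have hq : 0 ≤ star v ⬝ᵥ P *ᵥ v := hP.dotProduct_mulVec_nonneg v
  have hAPA : star v ⬝ᵥ (A * P * Aᴴ) *ᵥ v = (‖z‖ ^ 2 : 𝕜) * (star v ⬝ᵥ P *ᵥ v) := by
    rw [← mulVec_mulVec, ← mulVec_mulVec, hAv, dotProduct_mulVec, hvA, mulVec_smul,
      smul_dotProduct, dotProduct_smul, smul_eq_mul, smul_eq_mul, ← mul_assoc, RCLike.star_def,
      RCLike.mul_conj]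
  have hpos := hAP.dotProduct_mulVec_pos hv.2
  rw [sub_mulVec, dotProduct_sub, hAPA, ← one_sub_mul] at hpos
  by_contra! hz1
  have : ((1 - ‖z‖ ^ 2 : ℝ) : 𝕜) ≤ 0 := by
    rw [RCLike.ofReal_nonpos]; nlinarith [norm_nonneg z]
  push_cast at this
  exact (mul_nonpos_of_nonpos_of_nonneg this hq).not_gt hpos

lemma PosSemidef.map_algebraMap {M : Matrix n n ℝ} (hM : M.PosSemidef) :
    (M.map (algebraMap ℝ 𝕜)).PosSemidef := by
  classical
  obtain ⟨N, rfl⟩ := CStarAlgebra.nonneg_iff_eq_star_mul_self.mp hM.nonneg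
  rw [star_eq_conjTranspose, Matrix.map_mul, conjTranspose_map _ (fun x => by simp)]
  exact posSemidef_conjTranspose_mul_self _

lemma PosDef.map_algebraMap [DecidableEq n] {M : Matrix n n ℝ} (hM : M.PosDef) :
    (M.map (algebraMap ℝ 𝕜)).PosDef :=
  hM.posSemidef.map_algebraMap.posDef_iff_isUnit.mpr (hM.isUnit.map (algebraMap ℝ 𝕜).mapMatrix)

lemma norm_lt_one_of_mem_spectrum_map_of_posDef_sub [DecidableEq n] {A P : Matrix n n ℝ}
    (hP : P.PosSemidef) (hAP : (P - A * P * Aᵀ).PosDef) {z : 𝕜}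
    (hz : z ∈ spectrum 𝕜 (A.map (algebraMap ℝ 𝕜))) : ‖z‖ < 1 := by
  refine norm_lt_one_of_mem_spectrum_of_posDef_sub hP.map_algebraMap ?_ hz
  rw [← conjTranspose_map _ (fun x => by simp), conjTranspose_eq_transpose_of_trivial]
  simpa only [Matrix.map_sub _ (map_sub _), Matrix.map_mul] using hAP.map_algebraMap (𝕜 := 𝕜)

end RCLike

section LMI

variable {n w p : Type*} [Fintype n] [Fintype w] [Fintype p]
  [DecidableEq n] [DecidableEq w] [DecidableEq p] {ϑ : ℝ}

lemma smul_one_le_sub_sub_of_smul_one_le_fromBlocks (hϑ : 0 ≤ ϑ) {A P : Matrix n n ℝ}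
    {B : Matrix n w ℝ}
    (h : ϑ • 1 ≤ fromBlocks (fromBlocks P (A * P) (P * Aᵀ) P) (fromRows B 0) (fromCols Bᵀ 0) 1) :
    ϑ • 1 ≤ P - A * P * Aᵀ - B * Bᵀ := by
  let S := fromCols (fromCols (1 : Matrix n n ℝ) (-A)) (-B)
  have hS : S * Sᴴ = 1 + (A * Aᴴ + B * Bᴴ) := by
    simp [S, fromCols_mul_fromRows, transpose_fromCols, add_assoc]
  have hSMS : S * fromBlocks (fromBlocks P (A * P) (P * Aᵀ) P) (fromRows B 0) (fromCols Bᵀ 0) 1 * Sᴴ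
      = P - A * P * Aᵀ - B * Bᵀ := by
    simp [S, Matrix.mul_assoc, fromBlocks_mul_fromRows, fromCols_mul_fromRows, transpose_fromCols,
      fromRows_add_fromRows]
    abel
  rw [← hSMS]
  refine smul_one_le_mul_mul_conjTranspose hϑ h ?_
  rw [hS]
  exact le_add_of_nonneg_right
    ((posSemidef_self_mul_conjTranspose A).add (posSemidef_self_mul_conjTranspose B)).nonneg

lemma smul_one_le_sub_of_smul_one_le_fromBlocks (hϑ : 0 ≤ ϑ) {P : Matrix n n ℝ}
    {Z : Matrix p p ℝ} {C : Matrix p n ℝ} (h : ϑ • 1 ≤ fromBlocks Z (C * P) (P * Cᵀ) P) :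
    ϑ • 1 ≤ Z - C * P * Cᵀ := by
  let S := fromCols (1 : Matrix p p ℝ) (-C)
  have hS : S * Sᴴ = 1 + C * Cᴴ := by
    simp [S, fromCols_mul_fromRows, transpose_fromCols]
  have hSMS : S * fromBlocks Z (C * P) (P * Cᵀ) P * Sᴴ = Z - C * P * Cᵀ := by
    simp [S, Matrix.mul_assoc, fromBlocks_mul_fromRows, fromCols_mul_fromRows, transpose_fromCols]
    abel
  rw [← hSMS]
  refine smul_one_le_mul_mul_conjTranspose hϑ h ?_
  rw [hS]
  exact le_add_of_nonneg_right (posSemidef_self_mul_conjTranspose C).nonneg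

lemma smul_one_le_of_smul_one_le_fromBlocks (hϑ : 0 ≤ ϑ) {P : Matrix n n ℝ}
    {Z : Matrix p p ℝ} {C : Matrix p n ℝ} (h : ϑ • 1 ≤ fromBlocks Z (C * P) (P * Cᵀ) P) :
    ϑ • 1 ≤ P := by
  let S : Matrix n (p ⊕ n) ℝ := fromCols 0 1
  have hSMS : S * fromBlocks Z (C * P) (P * Cᵀ) P * Sᴴ = P := by
    simp [S, Matrix.mul_assoc, fromBlocks_mul_fromRows, fromCols_mul_fromRows, transpose_fromCols]
  rw [← hSMS]
  exact smul_one_le_mul_mul_conjTranspose hϑ h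
    (by simp [S, fromCols_mul_fromRows, transpose_fromCols])

end LMI

end Matrix

theorem h2_norm_lmi_general
    (n w p : ℕ)
    (A : Matrix (Fin n) (Fin n) ℝ) (B : Matrix (Fin n) (Fin w) ℝ)
    (C : Matrix (Fin p) (Fin n) ℝ)
    (η ϑ : ℝ) (hϑ : 0 < ϑ)
    (P : Matrix (Fin n) (Fin n) ℝ) (Z : Matrix (Fin p) (Fin p) ℝ)
    (h1 : (Matrix.fromBlocks
            (Matrix.fromBlocks P (A * P) (P * Aᵀ) P)
            (Matrix.fromRows B (0 : Matrix (Fin n) (Fin w) ℝ))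
            (Matrix.fromCols Bᵀ (0 : Matrix (Fin w) (Fin n) ℝ))
            (1 : Matrix (Fin w) (Fin w) ℝ)
          - ϑ • 1).PosSemidef)
    (h2 : (Matrix.fromBlocks Z (C * P) (P * Cᵀ) P - ϑ • 1).PosSemidef)
    (h3 : Z.trace ≤ η - ϑ) :
    (∀ z ∈ spectrum ℂ (A.map (Complex.ofReal)), ‖z‖ < 1) ∧
    Summable (fun k : ℕ => ((C * A ^ k * B) * (C * A ^ k * B)ᵀ).trace) ∧
    ∑' k : ℕ, ((C * A ^ k * B) * (C * A ^ k * B)ᵀ).trace < η := by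
  have hStein := smul_one_le_sub_sub_of_smul_one_le_fromBlocks hϑ.le h1
  have hZCPC := smul_one_le_sub_of_smul_one_le_fromBlocks hϑ.le h2
  have hP : 0 ≤ P := nonneg_of_smul_one_le hϑ.le (smul_one_le_of_smul_one_le_fromBlocks hϑ.le h2)
  have hAP : (P - A * P * Aᵀ).PosDef := posDef_of_smul_one_le hϑ
    (hStein.trans (sub_le_self _ (posSemidef_self_mul_conjTranspose B).nonneg))
  have hAPB : A * P * Aᴴ + B * Bᴴ ≤ P := by
    simpa [sub_sub] using nonneg_of_smul_one_le hϑ.le hStein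
  have hCPC : C * P * Cᴴ ≤ Z := by
    simpa using nonneg_of_smul_one_le hϑ.le hZCPC
  have hbound (N : ℕ) :
      ∑ k ∈ Finset.range N, ((C * A ^ k * B) * (C * A ^ k * B)ᵀ).trace ≤ η - ϑ :=
    (sum_range_trace_mul_pow_mul_le hP hAPB C N).trans ((trace_le_trace hCPC).trans h3)
  have hnonneg (k : ℕ) : 0 ≤ ((C * A ^ k * B) * (C * A ^ k * B)ᵀ).trace :=
    (posSemidef_self_mul_conjTranspose _).trace_nonneg
  exact ⟨fun z hz => norm_lt_one_of_mem_spectrum_map_of_posDef_sub hP.posSemidef hAP hz,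
    summable_of_sum_range_le hnonneg hbound,
    (Real.tsum_le_of_sum_range_le hnonneg hbound).trans_lt (by linarith)⟩

/-- H₂-norm LMI characterization (sufficiency direction): feasibility of the two LMIs
together with the trace bound implies Schur stability of `A` and that the squared
H₂-norm `∑ₖ Trace((C Aᵏ B)(C Aᵏ B)ᵀ)` is finite and less than `η`. -/
theorem h2_norm_lmi
    (n w p : ℕ)
    (A : Matrix (Fin n) (Fin n) ℝ) (B : Matrix (Fin n) (Fin w) ℝ)
    (C : Matrix (Fin p) (Fin n) ℝ)
    (η ϑ : ℝ) (hη : 0 < η) (hϑ : 0 < ϑ)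
    (P : Matrix (Fin n) (Fin n) ℝ) (Z : Matrix (Fin p) (Fin p) ℝ)
    (hP : P.IsSymm) (hZ : Z.IsSymm)
    (h1 : (Matrix.fromBlocks
            (Matrix.fromBlocks P (A * P) (P * Aᵀ) P)
            (Matrix.fromRows B (0 : Matrix (Fin n) (Fin w) ℝ))
            (Matrix.fromCols Bᵀ (0 : Matrix (Fin w) (Fin n) ℝ))
            (1 : Matrix (Fin w) (Fin w) ℝ)
          - ϑ • 1).PosSemidef)
    (h2 : (Matrix.fromBlocks Z (C * P) (P * Cᵀ) P - ϑ • 1).PosSemidef)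
    (h3 : Z.trace ≤ η - ϑ) :
    (∀ z ∈ spectrum ℂ (A.map (Complex.ofReal)), ‖z‖ < 1) ∧
    Summable (fun k : ℕ => ((C * A ^ k * B) * (C * A ^ k * B)ᵀ).trace) ∧
    ∑' k : ℕ, ((C * A ^ k * B) * (C * A ^ k * B)ᵀ).trace < η :=
  h2_norm_lmi_general n w p A B C η ϑ hϑ P Z h1 h2 h3
end

section
/- Let A₁ ∈ ℝ^{n×n}, A₂ ∈ ℝ^{d×d}, W ∈ ℝ^{n×w}, B_r ∈ ℝ^{d×p}, C ∈ ℝ^{p×n}, D ∈ ℝ^{p×w}, let α ∈ ℝ, γ > 0, ϑ > 0, let P ∈ ℝ^{(n+d)×(n+d)} be symmetric, and let G₁ ∈ ℝ^{(n+d)×(n+d)} and G₂ ∈ ℝ^{w×w} be invertible. Define G = blockdiag(G₁, G₂), Â = [ blockdiag(A₁, A₂) , [Wᵀ 0]ᵀ ] ∈ ℝ^{(n+d)×(n+d+w)}, D̂ = [ [C 0] , D ] ∈ ℝ^{p×(n+d+w)}, B̂ = [0ᵀ, −B_rᵀ]ᵀ ∈ ℝ^{(n+d)×p}, and Ξ =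 αG + αGᵀ − α² blockdiag(P, I_w). If the 4×4 block matrix [[P, ÂG, B̂, 0],[GᵀÂᵀ, Ξ, 0, GᵀD̂ᵀ],[B̂ᵀ, 0, (1/γ)I_p, 0],[0, D̂G, 0, γI_p]] − ϑI is positive semidefinite, then the block matrix [[P, 𝒜P, 𝒟],[P𝒜ᵀ, P, 0],[𝒟ᵀ, 0, I_w]] is positive definite, where 𝒜 = [[A₁, 0],[B_r C, A₂]] ∈ ℝ^{(n+d)×(n+d)} and 𝒟 = [Wᵀ, (B_r D)ᵀ]ᵀ ∈ ℝ^{(n+d)×w}. -/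
open Matrix

/-!
Let `M` be the LMI matrix without `- ϑ I`, so `M ≻ 0`, and write `P̂ = blockdiag(P, I_w)` and
`K = [𝒜 𝒟]`, so that `Â = K + B̂ D̂`. Testing `M` at `z = (x₁, G⁻¹ P̂ y, -γ B̂ᵀ x₁, -γ⁻¹ D̂ P̂ y)` gives
`zᵀ M z = x₁ᵀ P x₁ + 2 x₁ᵀ K P̂ y + 2 uᵀ v - γ |u|² - γ⁻¹ |v|² + z₂ᵀ Ξ z₂` with `u = B̂ᵀ x₁` and
`v = D̂ P̂ y`. Young's inequality disposes of the `u, v` terms, and completing the square,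
`(G - α P̂)ᵀ P̂⁻¹ (G - α P̂) ⪰ 0`, gives `Ξ ⪯ Gᵀ P̂⁻¹ G`, hence `z₂ᵀ Ξ z₂ ≤ yᵀ P̂ y`. So
`0 < zᵀ M z ≤ (x₁, y)ᵀ [[P, K P̂], [P̂ Kᵀ, P̂]] (x₁, y)`, and up to reassociating the blocks this
matrix is the target.
-/

namespace Matrix

section BlockAlgebra

variable {l m n o R : Type*}

theorem sumElim_dotProduct_fromBlocks_mulVec_sumElim [Fintype l] [Fintype m] [Fintype n]
    [Fintype o] [NonUnitalNonAssocSemiring R]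
    (A : Matrix n l R) (B : Matrix n m R) (C : Matrix o l R) (D : Matrix o m R)
    (x₁ : n → R) (x₂ : o → R) (y₁ : l → R) (y₂ : m → R) :
    Sum.elim x₁ x₂ ⬝ᵥ (fromBlocks A B C D *ᵥ Sum.elim y₁ y₂) =
      x₁ ⬝ᵥ (A *ᵥ y₁) + x₁ ⬝ᵥ (B *ᵥ y₂) + (x₂ ⬝ᵥ (C *ᵥ y₁) + x₂ ⬝ᵥ (D *ᵥ y₂)) := by
  simp only [fromBlocks_mulVec, Sum.elim_comp_inl, Sum.elim_comp_inr, sumElim_dotProduct_sumElim,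
    dotProduct_add]

theorem fromBlocks_fromBlocks_fromRows_fromCols (A : Matrix l l R) (A₁₂ : Matrix l m R)
    (A₂₁ : Matrix m l R) (A₂₂ : Matrix m m R) (B₁ : Matrix l n R) (B₂ : Matrix m n R)
    (C₁ : Matrix n l R) (C₂ : Matrix n m R) (D : Matrix n n R) :
    fromBlocks (fromBlocks A A₁₂ A₂₁ A₂₂) (fromRows B₁ B₂) (fromCols C₁ C₂) D =
      (fromBlocks A (fromCols A₁₂ B₁) (fromRows A₂₁ C₁) (fromBlocks A₂₂ B₂ C₂ D)).submatrix
        (Equiv.sumAssoc l m n) (Equiv.sumAssoc l m n) := by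
  ext ((i | i) | i) ((j | j) | j) <;> rfl

theorem fromCols_fromBlocks_fromRows_eq_add_mul [Fintype o] [Ring R]
    (A₁ : Matrix l l R) (A₂ : Matrix m m R) (W : Matrix l n R) (B : Matrix m o R)
    (C : Matrix o l R) (D : Matrix o n R) :
    fromCols (fromBlocks A₁ 0 0 A₂) (fromRows W 0) =
      fromCols (fromBlocks A₁ 0 (B * C) A₂) (fromRows W (B * D)) +
        fromRows 0 (-B) * fromCols (fromCols C 0) D := by
  ext (i | i) ((j | j) | j) <;> simp [fromRows_mul]

end BlockAlgebra

section PosDef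

variable {m n R : Type*}

theorem PosSemidef.posDef_of_sub_smul_one [Fintype n] [DecidableEq n] [CommRing R]
    [PartialOrder R] [StarRing R] [StarOrderedRing R] [NoZeroDivisors R] [IsStrictOrderedRing R]
    {M : Matrix n n R} {c : R} (hM : (M - c • 1).PosSemidef) (hc : 0 < c) : M.PosDef := by
  simpa using PosDef.posSemidef_add hM (PosDef.one.smul hc)

theorem PosDef.toBlocks₁₁ [Ring R] [PartialOrder R] [StarRing R]
    {M : Matrix (m ⊕ n) (m ⊕ n) R} (hM : M.PosDef) : M.toBlocks₁₁.PosDef :=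
  hM.submatrix Sum.inl_injective

theorem PosDef.fromBlocks_zero [Fintype m] [Fintype n] [Ring R] [PartialOrder R] [StarRing R]
    [IsOrderedAddMonoid R] {A : Matrix m m R} {D : Matrix n n R} (hA : A.PosDef)
    (hD : D.PosDef) : (fromBlocks A 0 0 D).PosDef := by
  refine PosDef.of_dotProduct_mulVec_pos (hA.isHermitian.fromBlocks (by simp) hD.isHermitian)
    fun x hx => ?_
  obtain ⟨x₁, x₂, rfl⟩ : ∃ x₁ x₂, x = Sum.elim x₁ x₂ := ⟨_, _, (Sum.elim_comp_inl_inr x).symm⟩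
  simp only [Function.star_sumElim, sumElim_dotProduct_fromBlocks_mulVec_sumElim, zero_mulVec,
    dotProduct_zero, add_zero, zero_add]
  by_cases hx₁ : x₁ = 0
  · subst hx₁
    have hx₂ : x₂ ≠ 0 := by rintro rfl; exact hx Sum.elim_zero_zero
    simpa using hD.dotProduct_mulVec_pos hx₂
  · exact add_pos_of_pos_of_nonneg (hA.dotProduct_mulVec_pos hx₁)
      (hD.posSemidef.dotProduct_mulVec_nonneg x₂)

theorem PosDef.posSemidef_transpose_mul_inv_mul_sub [Fintype n] [DecidableEq n] {K : Type*}
    [Field K] [PartialOrder K] [StarRing K] [TrivialStar K] {S : Matrix n n K} (hS : S.PosDef)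
    (G : Matrix n n K) (α : K) :
    (Gᵀ * S⁻¹ * G - (α • G + α • Gᵀ - α ^ 2 • S)).PosSemidef := by
  have hSdet : IsUnit S.det := (isUnit_iff_isUnit_det S).mp hS.isUnit
  have hST : Sᵀ = S := isHermitian_iff_isSymm.mp hS.isHermitian
  have hsquare :
      Gᵀ * S⁻¹ * G - (α • G + α • Gᵀ - α ^ 2 • S) = (G - α • S)ᵀ * S⁻¹ * (G - α • S) := by
    simp only [transpose_sub, transpose_smul, hST, Matrix.sub_mul, Matrix.mul_sub,
      Matrix.smul_mul, Matrix.mul_smul, Matrix.mul_assoc, nonsing_inv_mul S hSdet,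
      mul_nonsing_inv S hSdet, Matrix.mul_one, Matrix.one_mul, smul_sub, smul_smul]
    rw [sq]; abel
  rw [hsquare, ← conjTranspose_eq_transpose_of_trivial]
  exact hS.inv.posSemidef.conjTranspose_mul_mul_same _

end PosDef

end Matrix

section OrderedField

variable {𝕜 : Type*} [Field 𝕜] [LinearOrder 𝕜] [IsStrictOrderedRing 𝕜]

theorem two_mul_dotProduct_le {n : Type*} [Fintype n] {γ : 𝕜} (hγ : 0 < γ) (u v : n → 𝕜) :
    2 * (u ⬝ᵥ v) ≤ γ * (u ⬝ᵥ u) + γ⁻¹ * (v ⬝ᵥ v) := by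
  simp only [dotProduct, Finset.mul_sum, ← Finset.sum_add_distrib]
  refine Finset.sum_le_sum fun i _ => ?_
  simpa only [sq, mul_assoc] using two_mul_le_add_mul_sq (a := u i) (b := v i) hγ

variable [StarRing 𝕜] [TrivialStar 𝕜] {ι κ π : Type*} [Fintype ι] [Fintype κ] [Fintype π]
  [DecidableEq κ] [DecidableEq π]

def dilatedLMI (P : Matrix ι ι 𝕜) (Ahat : Matrix ι κ 𝕜) (B : Matrix ι π 𝕜) (E : Matrix π κ 𝕜)
    (G Ξ : Matrix κ κ 𝕜) (γ : 𝕜) : Matrix ((ι ⊕ κ) ⊕ (π ⊕ π)) ((ι ⊕ κ) ⊕ (π ⊕ π)) 𝕜 :=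
  fromBlocks (fromBlocks P (Ahat * G) (Gᵀ * Ahatᵀ) Ξ) (fromBlocks B 0 0 (Gᵀ * Eᵀ))
    (fromBlocks Bᵀ 0 0 (E * G)) (fromBlocks ((1 / γ) • 1) 0 0 (γ • 1))

variable {P : Matrix ι ι 𝕜} {S G Ξ : Matrix κ κ 𝕜} {Ahat K : Matrix ι κ 𝕜} {B : Matrix ι π 𝕜}
  {E : Matrix π κ 𝕜} {γ : 𝕜}

/-- The last two components of the test vector minimise the form in those coordinates. -/
theorem dotProduct_dilatedLMI_mulVec_le (hγ : 0 < γ) (hS : S.IsSymm) (hSdet : IsUnit S.det)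
    (hΞ : (Gᵀ * S⁻¹ * G - Ξ).PosSemidef) (hAhat : Ahat = K + B * E) (x₁ : ι → 𝕜)
    {y z₂ : κ → 𝕜} (hGz : G *ᵥ z₂ = S *ᵥ y) :
    let z := Sum.elim (Sum.elim x₁ z₂) (Sum.elim (-γ • (Bᵀ *ᵥ x₁)) (-γ⁻¹ • (E *ᵥ (S *ᵥ y))))
    z ⬝ᵥ (dilatedLMI P Ahat B E G Ξ γ *ᵥ z) ≤
      Sum.elim x₁ y ⬝ᵥ (fromBlocks P (K * S) (S * Kᵀ) S *ᵥ Sum.elim x₁ y) := by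
  intro z
  set q := S *ᵥ y with hq
  set u := Bᵀ *ᵥ x₁ with hu
  set v := E *ᵥ q with hv
  have hSq : S⁻¹ *ᵥ q = y := by rw [mulVec_mulVec, nonsing_inv_mul S hSdet, one_mulVec]
  simp only [dilatedLMI, z, sumElim_dotProduct_fromBlocks_mulVec_sumElim, ← mulVec_mulVec, hGz,
    zero_mulVec, dotProduct_zero, mul_zero, add_zero, zero_add, smul_mulVec, one_mulVec,
    mulVec_smul, dotProduct_smul, smul_dotProduct, smul_eq_mul]
  simp only [← hq, ← hu, ← hv]
  have hAq : x₁ ⬝ᵥ (Ahat *ᵥ q) = x₁ ⬝ᵥ (K *ᵥ q) + u ⬝ᵥ v := by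
    rw [hAhat, add_mulVec, dotProduct_add, ← mulVec_mulVec, ← dotProduct_transpose_mulVec B,
      dotProduct_comm (E *ᵥ q)]
  have hGAhat : z₂ ⬝ᵥ (Gᵀ *ᵥ Ahatᵀ *ᵥ x₁) = x₁ ⬝ᵥ (Ahat *ᵥ q) := by
    rw [dotProduct_transpose_mulVec, hGz, dotProduct_comm, dotProduct_transpose_mulVec]
  have hGE : z₂ ⬝ᵥ (Gᵀ *ᵥ Eᵀ *ᵥ v) = v ⬝ᵥ v := by
    rw [dotProduct_transpose_mulVec, hGz, dotProduct_comm, dotProduct_transpose_mulVec]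
  have hBu : x₁ ⬝ᵥ (B *ᵥ u) = u ⬝ᵥ u := by rw [← dotProduct_transpose_mulVec]
  have hKS : y ⬝ᵥ (S *ᵥ Kᵀ *ᵥ x₁) = x₁ ⬝ᵥ (K *ᵥ q) := by
    rw [← hS.eq, dotProduct_transpose_mulVec, dotProduct_comm, dotProduct_transpose_mulVec]
  have hΞz : z₂ ⬝ᵥ (Ξ *ᵥ z₂) ≤ y ⬝ᵥ q := by
    have h := hΞ.dotProduct_mulVec_nonneg z₂
    rw [star_trivial, sub_mulVec, dotProduct_sub, ← mulVec_mulVec, ← mulVec_mulVec, hGz, hSq,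
      dotProduct_transpose_mulVec, hGz] at h
    linarith [dotProduct_comm q y]
  have hγu : -γ * (1 / γ * (-γ * (u ⬝ᵥ u))) = γ * (u ⬝ᵥ u) := by field_simp
  have hγv : -γ⁻¹ * (γ * (-γ⁻¹ * (v ⬝ᵥ v))) = γ⁻¹ * (v ⬝ᵥ v) := by field_simp
  rw [hγu, hγv, hGAhat, hGE, hBu, hAq, hKS]
  linarith [two_mul_dotProduct_le hγ u v]

theorem posDef_fromBlocks_of_dilatedLMI (hγ : 0 < γ) (hS : S.IsSymm) (hSdet : IsUnit S.det)
    (hGdet : IsUnit G.det) (hΞ : (Gᵀ * S⁻¹ * G - Ξ).PosSemidef) (hAhat : Ahat = K + B * E)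
    (hM : (dilatedLMI P Ahat B E G Ξ γ).PosDef) :
    (fromBlocks P (K * S) (S * Kᵀ) S).PosDef := by
  have hP : P.IsHermitian := (isHermitian_fromBlocks_iff.mp
    (isHermitian_fromBlocks_iff.mp hM.isHermitian).1).1
  refine PosDef.of_dotProduct_mulVec_pos (hP.fromBlocks ?_ (isHermitian_iff_isSymm.mpr hS))
    fun x hx => ?_
  · simp [transpose_mul, hS.eq]
  obtain ⟨x₁, y, rfl⟩ : ∃ x₁ y, x = Sum.elim x₁ y := ⟨_, _, (Sum.elim_comp_inl_inr x).symm⟩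
  have hGz : G *ᵥ (G⁻¹ *ᵥ (S *ᵥ y)) = S *ᵥ y := by
    rw [mulVec_mulVec, mul_nonsing_inv G hGdet, one_mulVec]
  have hz : Sum.elim (Sum.elim x₁ (G⁻¹ *ᵥ (S *ᵥ y)))
      (Sum.elim (-γ • (Bᵀ *ᵥ x₁)) (-γ⁻¹ • (E *ᵥ (S *ᵥ y)))) ≠ 0 := by
    intro h0
    have hx₁ : x₁ = 0 := funext fun i => congrFun h0 (Sum.inl (Sum.inl i))
    have hz₂ : G⁻¹ *ᵥ (S *ᵥ y) = 0 := funext fun i => congrFun h0 (Sum.inl (Sum.inr i))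
    have hy : y = 0 := calc
      y = S⁻¹ *ᵥ (G *ᵥ (G⁻¹ *ᵥ (S *ᵥ y))) := by
        rw [hGz, mulVec_mulVec, nonsing_inv_mul S hSdet, one_mulVec]
      _ = 0 := by rw [hz₂, mulVec_zero, mulVec_zero]
    exact hx (by rw [hx₁, hy, Sum.elim_zero_zero])
  have hpos := hM.dotProduct_mulVec_pos hz
  rw [star_trivial] at hpos ⊢
  exact hpos.trans_le (dotProduct_dilatedLMI_mulVec_le hγ hS hSdet hΞ hAhat x₁ hGz)

end OrderedField

theorem lmi_safe_approximation_general
    (n d w p : ℕ)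
    (A₁ : Matrix (Fin n) (Fin n) ℝ) (A₂ : Matrix (Fin d) (Fin d) ℝ)
    (W : Matrix (Fin n) (Fin w) ℝ) (Br : Matrix (Fin d) (Fin p) ℝ)
    (C : Matrix (Fin p) (Fin n) ℝ) (D : Matrix (Fin p) (Fin w) ℝ)
    (α : ℝ) (γ ϑ : ℝ) (hγ : 0 < γ) (hϑ : 0 < ϑ)
    (P : Matrix (Fin n ⊕ Fin d) (Fin n ⊕ Fin d) ℝ)
    (G₁ : Matrix (Fin n ⊕ Fin d) (Fin n ⊕ Fin d) ℝ)
    (G₂ : Matrix (Fin w) (Fin w) ℝ)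
    (hG₁ : IsUnit G₁.det) (hG₂ : IsUnit G₂.det)
    -- G = blockdiag(G₁, G₂)
    (G : Matrix ((Fin n ⊕ Fin d) ⊕ Fin w) ((Fin n ⊕ Fin d) ⊕ Fin w) ℝ)
    (hG : G = Matrix.fromBlocks G₁ 0 0 G₂)
    -- Â = [ blockdiag(A₁, A₂) , [Wᵀ 0]ᵀ ]
    (Ahat : Matrix (Fin n ⊕ Fin d) ((Fin n ⊕ Fin d) ⊕ Fin w) ℝ)
    (hAhat : Ahat = Matrix.fromCols (Matrix.fromBlocks A₁ 0 0 A₂)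
      (Matrix.fromRows W (0 : Matrix (Fin d) (Fin w) ℝ)))
    -- D̂ = [ [C 0] , D ]
    (Dhat : Matrix (Fin p) ((Fin n ⊕ Fin d) ⊕ Fin w) ℝ)
    (hDhat : Dhat = Matrix.fromCols
      (Matrix.fromCols C (0 : Matrix (Fin p) (Fin d) ℝ)) D)
    -- B̂ = [0ᵀ, −Brᵀ]ᵀ
    (Bhat : Matrix (Fin n ⊕ Fin d) (Fin p) ℝ)
    (hBhat : Bhat = Matrix.fromRows (0 : Matrix (Fin n) (Fin p) ℝ) (-Br))
    -- Ξ = αG + αGᵀ − α² blockdiag(P, I_w)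
    (Ξ : Matrix ((Fin n ⊕ Fin d) ⊕ Fin w) ((Fin n ⊕ Fin d) ⊕ Fin w) ℝ)
    (hΞ : Ξ = α • G + α • Gᵀ - α ^ 2 • Matrix.fromBlocks P 0 0 (1 : Matrix (Fin w) (Fin w) ℝ))
    -- LMI hypothesis
    (hLMI : (Matrix.fromBlocks
        (Matrix.fromBlocks P (Ahat * G) (Gᵀ * Ahatᵀ) Ξ)
        (Matrix.fromBlocks Bhat 0 0 (Gᵀ * Dhatᵀ))
        (Matrix.fromBlocks Bhatᵀ 0 0 (Dhat * G))
        (Matrix.fromBlocks ((1 / γ) • (1 : Matrix (Fin p) (Fin p) ℝ)) 0 0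
          (γ • (1 : Matrix (Fin p) (Fin p) ℝ)))
      - ϑ • 1).PosSemidef) :
    (Matrix.fromBlocks
      (Matrix.fromBlocks P
        (Matrix.fromBlocks A₁ 0 (Br * C) A₂ * P)
        (P * (Matrix.fromBlocks A₁ 0 (Br * C) A₂)ᵀ) P)
      (Matrix.fromRows (Matrix.fromRows W (Br * D))
        (0 : Matrix (Fin n ⊕ Fin d) (Fin w) ℝ))
      (Matrix.fromCols (Matrix.fromRows W (Br * D))ᵀ
        (0 : Matrix (Fin w) (Fin n ⊕ Fin d) ℝ))
      (1 : Matrix (Fin w) (Fin w) ℝ)).PosDef := by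
  have hM := hLMI.posDef_of_sub_smul_one hϑ
  have hPpos : P.PosDef := by simpa using hM.toBlocks₁₁.toBlocks₁₁
  have hS : (fromBlocks P 0 0 (1 : Matrix (Fin w) (Fin w) ℝ)).PosDef :=
    hPpos.fromBlocks_zero PosDef.one
  have hGdet : IsUnit G.det := by rw [hG, det_fromBlocks_zero₂₁]; exact hG₁.mul hG₂
  rw [hΞ] at hM
  have key := posDef_fromBlocks_of_dilatedLMI hγ (isHermitian_iff_isSymm.mp hS.isHermitian)
    ((isUnit_iff_isUnit_det _).mp hS.isUnit) hGdet (hS.posSemidef_transpose_mul_inv_mul_sub G α)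
    (by rw [hAhat, hBhat, hDhat]; exact fromCols_fromBlocks_fromRows_eq_add_mul A₁ A₂ W Br C D) hM
  simp only [fromCols_mul_fromBlocks, transpose_fromCols, fromBlocks_mul_fromRows,
    Matrix.mul_zero, Matrix.zero_mul, Matrix.mul_one, Matrix.one_mul, add_zero, zero_add] at key
  rw [fromBlocks_fromBlocks_fromRows_fromCols]
  exact key.submatrix (Equiv.injective _)

/-- Safe convex approximation: feasibility of the 4×4 block LMI implies positive
definiteness of the nonlinear block matrix inequality appearing in the filter design. -/
theorem lmi_safe_approximation
    (n d w p : ℕ)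
    (A₁ : Matrix (Fin n) (Fin n) ℝ) (A₂ : Matrix (Fin d) (Fin d) ℝ)
    (W : Matrix (Fin n) (Fin w) ℝ) (Br : Matrix (Fin d) (Fin p) ℝ)
    (C : Matrix (Fin p) (Fin n) ℝ) (D : Matrix (Fin p) (Fin w) ℝ)
    (α : ℝ) (γ ϑ : ℝ) (hγ : 0 < γ) (hϑ : 0 < ϑ)
    (P : Matrix (Fin n ⊕ Fin d) (Fin n ⊕ Fin d) ℝ) (hP : P.IsSymm)
    (G₁ : Matrix (Fin n ⊕ Fin d) (Fin n ⊕ Fin d) ℝ)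
    (G₂ : Matrix (Fin w) (Fin w) ℝ)
    (hG₁ : IsUnit G₁.det) (hG₂ : IsUnit G₂.det)
    -- G = blockdiag(G₁, G₂)
    (G : Matrix ((Fin n ⊕ Fin d) ⊕ Fin w) ((Fin n ⊕ Fin d) ⊕ Fin w) ℝ)
    (hG : G = Matrix.fromBlocks G₁ 0 0 G₂)
    -- Â = [ blockdiag(A₁, A₂) , [Wᵀ 0]ᵀ ]
    (Ahat : Matrix (Fin n ⊕ Fin d) ((Fin n ⊕ Fin d) ⊕ Fin w) ℝ)
    (hAhat : Ahat = Matrix.fromCols (Matrix.fromBlocks A₁ 0 0 A₂)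
      (Matrix.fromRows W (0 : Matrix (Fin d) (Fin w) ℝ)))
    -- D̂ = [ [C 0] , D ]
    (Dhat : Matrix (Fin p) ((Fin n ⊕ Fin d) ⊕ Fin w) ℝ)
    (hDhat : Dhat = Matrix.fromCols
      (Matrix.fromCols C (0 : Matrix (Fin p) (Fin d) ℝ)) D)
    -- B̂ = [0ᵀ, −Brᵀ]ᵀ
    (Bhat : Matrix (Fin n ⊕ Fin d) (Fin p) ℝ)
    (hBhat : Bhat = Matrix.fromRows (0 : Matrix (Fin n) (Fin p) ℝ) (-Br))
    -- Ξ = αG + αGᵀ − α² blockdiag(P, I_w)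
    (Ξ : Matrix ((Fin n ⊕ Fin d) ⊕ Fin w) ((Fin n ⊕ Fin d) ⊕ Fin w) ℝ)
    (hΞ : Ξ = α • G + α • Gᵀ - α ^ 2 • Matrix.fromBlocks P 0 0 (1 : Matrix (Fin w) (Fin w) ℝ))
    -- LMI hypothesis
    (hLMI : (Matrix.fromBlocks
        (Matrix.fromBlocks P (Ahat * G) (Gᵀ * Ahatᵀ) Ξ)
        (Matrix.fromBlocks Bhat 0 0 (Gᵀ * Dhatᵀ))
        (Matrix.fromBlocks Bhatᵀ 0 0 (Dhat * G))
        (Matrix.fromBlocks ((1 / γ) • (1 : Matrix (Fin p) (Fin p) ℝ)) 0 0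
          (γ • (1 : Matrix (Fin p) (Fin p) ℝ)))
      - ϑ • 1).PosSemidef) :
    (Matrix.fromBlocks
      (Matrix.fromBlocks P
        (Matrix.fromBlocks A₁ 0 (Br * C) A₂ * P)
        (P * (Matrix.fromBlocks A₁ 0 (Br * C) A₂)ᵀ) P)
      (Matrix.fromRows (Matrix.fromRows W (Br * D))
        (0 : Matrix (Fin n ⊕ Fin d) (Fin w) ℝ))
      (Matrix.fromCols (Matrix.fromRows W (Br * D))ᵀ
        (0 : Matrix (Fin w) (Fin n ⊕ Fin d) ℝ))
      (1 : Matrix (Fin w) (Fin w) ℝ)).PosDef :=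
  lmi_safe_approximation_general n d w p A₁ A₂ W Br C D α γ ϑ hγ hϑ P G₁ G₂ hG₁ hG₂ G hG Ahat hAhat
    Dhat hDhat Bhat hBhat Ξ hΞ hLMI
end
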